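/- arXiv:2406.11369 — 4 statements merged into one kernel-verified Lean document; each statement's English description precedes it below -/
import Mathlib

section
/- Let Ω₁,…,Ωₙ (n > 1) be nonempty compact convex sets in ℝᵈ. If (z, v₁,…,vₙ, r) is an optimal solution of the SIB problem (minimize r subject to ‖z − vᵢ‖ ≤ r and vᵢ ∈ Ωᵢ for all i), then z lies in the convex hull of the union of the Ωᵢ. -/
/-!
If `z` were outside `K = conv {v₁, …, vₙ}`, its nearest point `p` in `K` would satisfy
`⟪z - p, x - p⟫ ≤ 0` for every `x ∈ K`, so `p` is strictly closer than `z` to every `vᵢ`.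
Since there are finitely many `vᵢ`, the tuple `(p, v, maxᵢ ‖p - vᵢ‖)` is feasible with a radius
smaller than `r`, contradicting optimality. Hence `z ∈ K ⊆ conv (⋃ Ωᵢ)`.
-/

theorem exists_lt_forall_le_of_forall_lt {ι β : Type*} [Finite ι] [LinearOrder β] [NoMinOrder β]
    {f : ι → β} {r : β} (h : ∀ i, f i < r) : ∃ r' < r, ∀ i, f i ≤ r' := by
  cases isEmpty_or_nonempty ι
  · obtain ⟨r', hr'⟩ := exists_lt r
    exact ⟨r', hr', isEmptyElim⟩
  · obtain ⟨j, hj⟩ := Finite.exists_max f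
    exact ⟨f j, h j, hj⟩

section InnerProductSpace

variable {E : Type*} [NormedAddCommGroup E] [InnerProductSpace ℝ E]

theorem norm_sub_lt_of_real_inner_le_zero {z p x : E} (hzp : z ≠ p)
    (h : inner ℝ (z - p) (x - p) ≤ 0) : ‖p - x‖ < ‖z - x‖ := by
  have hpos : 0 < ‖z - p‖ := norm_sub_pos_iff.mpr hzp
  have hsq : ‖z - x‖ ^ 2 = ‖z - p‖ ^ 2 - 2 * inner ℝ (z - p) (x - p) + ‖p - x‖ ^ 2 := by
    rw [show z - x = (z - p) + (p - x) by abel, norm_add_sq_real,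
      ← neg_sub x p, inner_neg_right]
    ring
  nlinarith [norm_nonneg (p - x), norm_nonneg (z - x)]

theorem exists_forall_norm_sub_lt_of_notMem {K : Set E} (hc : IsComplete K) (hK : Convex ℝ K)
    {z : E} (hz : z ∉ K) : ∃ p, ∀ x ∈ K, ‖p - x‖ < ‖z - x‖ := by
  rcases K.eq_empty_or_nonempty with rfl | hne
  · exact ⟨z, fun _ hx => hx.elim⟩
  obtain ⟨p, hpK, hp⟩ := exists_norm_eq_iInf_of_complete_convex hne hc hK z
  have hzp : z ≠ p := fun h => hz (h ▸ hpK)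
  exact ⟨p, fun x hx =>
    norm_sub_lt_of_real_inner_le_zero hzp ((norm_eq_iInf_iff_real_inner_le_zero hK hpK).mp hp x hx)⟩

end InnerProductSpace

theorem sib_center_in_hull_general {d n : ℕ}
    (Ω : Fin n → Set (EuclideanSpace ℝ (Fin d)))
    (z : EuclideanSpace ℝ (Fin d)) (v : Fin n → EuclideanSpace ℝ (Fin d)) (r : ℝ)
    (hfeas : ∀ i, v i ∈ Ω i ∧ ‖z - v i‖ ≤ r)
    (hopt : ∀ (z' : EuclideanSpace ℝ (Fin d)) (v' : Fin n → EuclideanSpace ℝ (Fin d)) (r' : ℝ),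
      (∀ i, v' i ∈ Ω i ∧ ‖z' - v' i‖ ≤ r') → r ≤ r') :
    z ∈ convexHull ℝ (⋃ i, Ω i) := by
  have hK : IsCompact (convexHull ℝ (Set.range v)) := (Set.finite_range v).isCompact_convexHull (𝕜 := ℝ)
  have hzK : z ∈ convexHull ℝ (Set.range v) := by
    by_contra hz
    obtain ⟨p, hp⟩ :=
      exists_forall_norm_sub_lt_of_notMem hK.isComplete (convex_convexHull ℝ _) hz
    have hcloser : ∀ i, ‖p - v i‖ < r := fun i =>
      (hp _ (subset_convexHull ℝ _ (Set.mem_range_self i))).trans_le (hfeas i).2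
    obtain ⟨r', hr', hle⟩ := exists_lt_forall_le_of_forall_lt hcloser
    exact (hopt p v r' fun i => ⟨(hfeas i).1, hle i⟩).not_gt hr'
  exact convexHull_mono (Set.range_subset_iff.2 fun i => Set.mem_iUnion_of_mem i (hfeas i).1) hzK

theorem sib_center_in_hull {d n : ℕ} (hn : 1 < n)
    (Ω : Fin n → Set (EuclideanSpace ℝ (Fin d)))
    (hne : ∀ i, (Ω i).Nonempty) (hcpt : ∀ i, IsCompact (Ω i))
    (hcvx : ∀ i, Convex ℝ (Ω i))
    (z : EuclideanSpace ℝ (Fin d)) (v : Fin n → EuclideanSpace ℝ (Fin d)) (r : ℝ)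
    (hfeas : ∀ i, v i ∈ Ω i ∧ ‖z - v i‖ ≤ r)
    (hopt : ∀ (z' : EuclideanSpace ℝ (Fin d)) (v' : Fin n → EuclideanSpace ℝ (Fin d)) (r' : ℝ),
      (∀ i, v' i ∈ Ω i ∧ ‖z' - v' i‖ ≤ r') → r ≤ r') :
    z ∈ convexHull ℝ (⋃ i, Ω i) :=
  sib_center_in_hull_general Ω z v r hfeas hopt
end

section
/- If the sets Ω₁,…,Ωₙ are nonempty compact convex and ⋂ᵢ Ωᵢ = ∅, then the optimal value r* of the SIB problem is strictly positive. -/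
theorem mem_iInter_of_forall_norm_sub_le_of_nonpos {ι E : Type*} [NormedAddGroup E]
    {Ω : ι → Set E} {z : E} {v : ι → E} {r : ℝ} (hr : r ≤ 0)
    (h : ∀ i, v i ∈ Ω i ∧ ‖z - v i‖ ≤ r) : z ∈ ⋂ i, Ω i :=
  Set.mem_iInter.2 fun i => by
    obtain ⟨hv, hle⟩ := h i
    rwa [sub_eq_zero.1 (norm_le_zero_iff.1 (hle.trans hr))]

theorem sib_positive_radius_of_empty_intersection_general {d n : ℕ}
    (Ω : Fin n → Set (EuclideanSpace ℝ (Fin d)))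
    (hempty : (⋂ i, Ω i) = ∅)
    (z : EuclideanSpace ℝ (Fin d)) (v : Fin n → EuclideanSpace ℝ (Fin d)) (r : ℝ)
    (hfeas : ∀ i, v i ∈ Ω i ∧ ‖z - v i‖ ≤ r) :
    0 < r := by
  by_contra! hr
  simpa [hempty] using mem_iInter_of_forall_norm_sub_le_of_nonpos hr hfeas

theorem sib_positive_radius_of_empty_intersection {d n : ℕ} (hn : 1 < n)
    (Ω : Fin n → Set (EuclideanSpace ℝ (Fin d)))
    (hne : ∀ i, (Ω i).Nonempty) (hcpt : ∀ i, IsCompact (Ω i))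
    (hcvx : ∀ i, Convex ℝ (Ω i))
    (hempty : (⋂ i, Ω i) = ∅)
    (z : EuclideanSpace ℝ (Fin d)) (v : Fin n → EuclideanSpace ℝ (Fin d)) (r : ℝ)
    (hfeas : ∀ i, v i ∈ Ω i ∧ ‖z - v i‖ ≤ r)
    (hopt : ∀ (z' : EuclideanSpace ℝ (Fin d)) (v' : Fin n → EuclideanSpace ℝ (Fin d)) (r' : ℝ),
      (∀ i, v' i ∈ Ω i ∧ ‖z' - v' i‖ ≤ r') → r ≤ r') :
    0 < r :=
  sib_positive_radius_of_empty_intersection_general Ω hempty z v r hfeas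
end

section
/- Let m ≥ 1, ν ∈ [1/m, 1], h ∈ ℝᵐ, and let k = ⌈1/ν⌉. Let j₁,…,jₘ be an ordering of indices with h_{j₁} ≤ h_{j₂} ≤ … ≤ h_{jₘ}. Define b ∈ ℝᵐ by b_{j} = ν for j ∈ {j₁,…,j_{k−1}}, b_{j_k} = 1 − ν(k−1), and b_j = 0 otherwise. Then b is feasible (b ≥ 0, ∑ⱼ bⱼ = 1, bⱼ ≤ ν for all j) and b minimizes hᵀb over the reduced simplex {b ∈ ℝᵐ : b ≥ 0, ∑ⱼ bⱼ = 1, bⱼ ≤ ν ∀j}. -/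
/-!
Sorting the coordinates by `h`, the point `b` puts the largest admissible mass `ν` on the
cheapest coordinates. Any feasible `c` differs from `b` by moving mass from coordinates before the
pivot `j_k` (where `c ≤ ν = b`) to coordinates after it (where `c ≥ 0 = b`), and with `h`
monotone along the order every term of `∑ (h_j - h_{j_k}) (b_j - c_j)` is nonpositive.
-/

open Finset

theorem sum_mul_le_sum_mul_of_exchange {ι R : Type*} [Fintype ι] [LinearOrder ι]
    [CommRing R] [LinearOrder R] [IsOrderedRing R] {g b c : ι → R} (hg : Monotone g)
    (hsum : ∑ i, b i = ∑ i, c i) (K : ι) (hlt : ∀ i < K, c i ≤ b i)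
    (hgt : ∀ i, K < i → b i ≤ c i) :
    ∑ i, g i * b i ≤ ∑ i, g i * c i := by
  have hterm : ∀ i, (g i - g K) * (b i - c i) ≤ 0 := by
    intro i
    rcases lt_trichotomy i K with hi | rfl | hi
    · exact mul_nonpos_of_nonpos_of_nonneg (sub_nonpos.2 (hg hi.le)) (sub_nonneg.2 (hlt i hi))
    · simp
    · exact mul_nonpos_of_nonneg_of_nonpos (sub_nonneg.2 (hg hi.le)) (sub_nonpos.2 (hgt i hi))
  have hexpand : ∑ i, (g i - g K) * (b i - c i)
      = (∑ i, g i * b i - ∑ i, g i * c i) - g K * (∑ i, b i - ∑ i, c i) := by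
    simp only [sub_mul, mul_sub, sum_sub_distrib, mul_sum]
    ring
  have := sum_nonpos fun i (_ : i ∈ univ) => hterm i
  rw [hexpand, hsum, sub_self, mul_zero, sub_zero, sub_nonpos] at this
  exact this

/-- The vector `b` of the theorem in sorted coordinates: position `i` stands for `j_{i+1}`. -/
def cappedPrefix (ν : ℝ) (k i : ℕ) : ℝ :=
  if i < k - 1 then ν else if i = k - 1 then 1 - ν * (k - 1) else 0

section cappedPrefix

variable {ν : ℝ} {k : ℕ}

theorem cappedPrefix_of_lt {i : ℕ} (hi : i < k - 1) : cappedPrefix ν k i = ν :=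
  if_pos hi

theorem cappedPrefix_of_gt {i : ℕ} (hi : k - 1 < i) : cappedPrefix ν k i = 0 := by
  rw [cappedPrefix, if_neg hi.not_gt, if_neg hi.ne']

theorem cappedPrefix_nonneg (hν : 0 ≤ ν) (hk : ν * (k - 1) ≤ 1) (i : ℕ) :
    0 ≤ cappedPrefix ν k i := by
  unfold cappedPrefix
  split_ifs <;> linarith

theorem cappedPrefix_le (hν : 0 ≤ ν) (hk : 1 ≤ ν * k) (i : ℕ) : cappedPrefix ν k i ≤ ν := by
  unfold cappedPrefix
  split_ifs <;> linarith

theorem sum_range_cappedPrefix {m : ℕ} (hk : 1 ≤ k) (hkm : k ≤ m) :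
    ∑ i ∈ range m, cappedPrefix ν k i = 1 := by
  obtain ⟨l, rfl⟩ := Nat.exists_eq_add_of_le' hk
  obtain ⟨j, rfl⟩ := Nat.exists_eq_add_of_le hkm
  have hhead : ∑ i ∈ range l, cappedPrefix ν (l + 1) i = l * ν := by
    rw [sum_congr rfl fun i hi => cappedPrefix_of_lt (by simpa using hi), sum_const, card_range,
      nsmul_eq_mul]
  have htail : ∑ i ∈ range j, cappedPrefix ν (l + 1) (l + 1 + i) = 0 :=
    sum_eq_zero fun i _ => cappedPrefix_of_gt (by omega)
  rw [sum_range_add, sum_range_succ, hhead, htail]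
  simp only [cappedPrefix, lt_irrefl, if_false, if_true, add_tsub_cancel_right, Nat.cast_add,
    Nat.cast_one]
  ring

theorem sum_mul_cappedPrefix_le {m : ℕ} {g c : Fin m → ℝ} (hg : Monotone g) (hkm : k - 1 < m)
    (hc0 : ∀ i, 0 ≤ c i) (hcν : ∀ i, c i ≤ ν)
    (hsum : ∑ i : Fin m, cappedPrefix ν k i = ∑ i, c i) :
    ∑ i : Fin m, g i * cappedPrefix ν k i ≤ ∑ i, g i * c i := by
  refine sum_mul_le_sum_mul_of_exchange hg hsum ⟨k - 1, hkm⟩ (fun i hi => ?_) (fun i hi => ?_)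
  · exact (cappedPrefix_of_lt hi).symm ▸ hcν i
  · exact (cappedPrefix_of_gt hi).symm ▸ hc0 i

end cappedPrefix

theorem one_le_mul_ceil_one_div {ν : ℝ} (hν : 0 < ν) : 1 ≤ ν * ⌈1 / ν⌉₊ := by
  have := Nat.le_ceil (1 / ν)
  rwa [div_le_iff₀ hν, mul_comm] at this

theorem mul_ceil_one_div_sub_one_le {ν : ℝ} (hν : 0 < ν) : ν * (⌈1 / ν⌉₊ - 1) ≤ 1 := by
  have := Nat.ceil_lt_add_one (one_div_pos.2 hν).le
  rw [← sub_lt_iff_lt_add, lt_div_iff₀ hν, mul_comm] at this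
  exact this.le

theorem reduced_simplex_linear_min {m : ℕ} (hm : 1 ≤ m)
    (ν : ℝ) (hν : ν ∈ Set.Icc (1 / (m : ℝ)) 1)
    (h : Fin m → ℝ)
    (σ : Equiv.Perm (Fin m)) (hσ : ∀ a b : Fin m, a ≤ b → h (σ a) ≤ h (σ b))
    (k : ℕ) (hk : k = ⌈1 / ν⌉₊)
    (b : Fin m → ℝ)
    (hb : ∀ j : Fin m,
      b j = if ((σ.symm j : ℕ) < k - 1) then ν
            else if ((σ.symm j : ℕ) = k - 1) then 1 - ν * (k - 1) else 0) :
    ((∀ j, 0 ≤ b j) ∧ (∑ j, b j) = 1 ∧ (∀ j, b j ≤ ν)) ∧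
    ∀ c : Fin m → ℝ, (∀ j, 0 ≤ c j) → (∑ j, c j) = 1 → (∀ j, c j ≤ ν) →
      (∑ j, h j * b j) ≤ (∑ j, h j * c j) := by
  have hm0 : (0 : ℝ) < m := by exact_mod_cast hm
  have hν0 : 0 < ν := (one_div_pos.2 hm0).trans_le hν.1
  have hk1 : 1 ≤ k := hk ▸ Nat.one_le_ceil_iff.2 (one_div_pos.2 hν0)
  have hkm : k ≤ m := hk ▸ Nat.ceil_le.2 ((one_div_le hν0 hm0).2 hν.1)
  have hbσ : ∀ i, b (σ i) = cappedPrefix ν k i := fun i => by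
    rw [hb, Equiv.symm_apply_apply, cappedPrefix]
  have hbj : ∀ j, b j = cappedPrefix ν k (σ.symm j) := fun j => by
    rw [← hbσ, Equiv.apply_symm_apply]
  have hprefix : ∑ i : Fin m, cappedPrefix ν k i = 1 := by
    rw [Fin.sum_univ_eq_sum_range (cappedPrefix ν k), sum_range_cappedPrefix hk1 hkm]
  have hsum : ∑ j, b j = 1 := by
    rw [← Equiv.sum_comp σ, sum_congr rfl fun i _ => hbσ i, hprefix]
  have hνk : 1 ≤ ν * k := hk ▸ one_le_mul_ceil_one_div hν0
  have hνk' : ν * (k - 1) ≤ 1 := hk ▸ mul_ceil_one_div_sub_one_le hν0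
  refine ⟨⟨fun j => hbj j ▸ cappedPrefix_nonneg hν0.le hνk' _, hsum,
    fun j => hbj j ▸ cappedPrefix_le hν0.le hνk _⟩, fun c hc0 hc1 hcν => ?_⟩
  calc ∑ j, h j * b j = ∑ i : Fin m, h (σ i) * cappedPrefix ν k i := by
        simp only [← hbσ]; exact (Equiv.sum_comp σ fun j => h j * b j).symm
    _ ≤ ∑ i, h (σ i) * c (σ i) :=
        sum_mul_cappedPrefix_le (fun i j => hσ i j) (by omega) (fun _ => hc0 _) (fun _ => hcν _)
          (by rw [Equiv.sum_comp σ c, hc1, hprefix])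
    _ = ∑ j, h j * c j := Equiv.sum_comp σ fun j => h j * c j
end

section
/- Let Ω₁,…,Ωₙ be nonempty compact convex subsets of ℝᵈ and suppose (z, v₁,…,vₙ, r) is a feasible solution of the SIB problem (‖z − vᵢ‖ ≤ r, vᵢ ∈ Ωᵢ) with z not in conv(⋃ᵢ Ωᵢ). Then letting z' be the projection of z onto conv(⋃ᵢ Ωᵢ) and r' = maxᵢ ‖vᵢ − z'‖, the tuple (z', v₁,…,vₙ, r') is feasible with r' < r. -/
/-!
The nearest point `z'` of the convex set `K = conv (⋃ᵢ Ωᵢ)` to an outside point `z` sees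
every `w ∈ K` at an obtuse angle: `⟪z - z', w - z'⟫ ≤ 0`. Expanding `‖z - w‖² = ‖(z - z') - (w - z')‖²` then gives
`‖w - z'‖ < ‖z - w‖` for every `w ∈ K`, in particular for each `vᵢ ∈ Ωᵢ`. The new radius is a
maximum over finitely many such `i`, so it is attained and strictly below `r`.
-/

open scoped RealInnerProductSpace

section NearestPoint

variable {F : Type*} [NormedAddCommGroup F] [InnerProductSpace ℝ F]

theorem norm_sub_lt_norm_sub_of_inner_nonpos {p z w : F} (hzp : z ≠ p)
    (hangle : ⟪z - p, w - p⟫ ≤ 0) : ‖w - p‖ < ‖z - w‖ := by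
  have hpos : 0 < ‖z - p‖ := norm_pos_iff.mpr (sub_ne_zero.mpr hzp)
  have hexpand : ‖z - w‖ ^ 2 = ‖z - p‖ ^ 2 - 2 * ⟪z - p, w - p⟫ + ‖w - p‖ ^ 2 := by
    rw [← norm_sub_sq_real, sub_sub_sub_cancel_right]
  refine lt_of_pow_lt_pow_left₀ 2 (norm_nonneg _) ?_
  nlinarith

theorem inner_sub_nonpos_of_forall_norm_sub_le {K : Set F} (hK : Convex ℝ K) {z p : F}
    (hp : p ∈ K) (hmin : ∀ x ∈ K, ‖z - p‖ ≤ ‖z - x‖) : ∀ w ∈ K, ⟪z - p, w - p⟫ ≤ 0 := by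
  have : Nonempty K := ⟨⟨p, hp⟩⟩
  refine (norm_eq_iInf_iff_real_inner_le_zero hK hp).mp (le_antisymm ?_ ?_)
  · exact le_ciInf fun x => hmin x x.2
  · exact ciInf_le ⟨0, Set.forall_mem_range.mpr fun _ => norm_nonneg _⟩ (⟨p, hp⟩ : K)

theorem norm_sub_lt_of_forall_norm_sub_le {K : Set F} (hK : Convex ℝ K) {z p w : F}
    (hz : z ∉ K) (hp : p ∈ K) (hmin : ∀ x ∈ K, ‖z - p‖ ≤ ‖z - x‖) (hw : w ∈ K) :
    ‖w - p‖ < ‖z - w‖ :=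
  norm_sub_lt_norm_sub_of_inner_nonpos (ne_of_mem_of_not_mem hp hz).symm
    (inner_sub_nonpos_of_forall_norm_sub_le hK hp hmin w hw)

end NearestPoint

theorem sib_projection_improves_general {d n : ℕ} (hn : 0 < n)
    (Ω : Fin n → Set (EuclideanSpace ℝ (Fin d)))
    (z : EuclideanSpace ℝ (Fin d)) (v : Fin n → EuclideanSpace ℝ (Fin d)) (r : ℝ)
    (hfeas : ∀ i, v i ∈ Ω i ∧ ‖z - v i‖ ≤ r)
    (hz : z ∉ convexHull ℝ (⋃ i, Ω i))
    (z' : EuclideanSpace ℝ (Fin d))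
    (hz' : z' ∈ convexHull ℝ (⋃ i, Ω i))
    (hproj : ∀ x ∈ convexHull ℝ (⋃ i, Ω i), ‖z - z'‖ ≤ ‖z - x‖)
    (r' : ℝ) (hr' : r' = ⨆ i, ‖v i - z'‖) :
    (∀ i, v i ∈ Ω i ∧ ‖z' - v i‖ ≤ r') ∧ r' < r := by
  have : Nonempty (Fin n) := ⟨⟨0, hn⟩⟩
  have hv_mem (i : Fin n) : v i ∈ convexHull ℝ (⋃ i, Ω i) :=
    subset_convexHull ℝ _ (Set.mem_iUnion_of_mem i (hfeas i).1)
  refine ⟨fun i => ⟨(hfeas i).1, ?_⟩, ?_⟩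
  · rw [norm_sub_rev, hr']
    exact Finite.le_ciSup (fun i => ‖v i - z'‖) i
  · obtain ⟨i, hi⟩ := exists_eq_ciSup_of_finite (f := fun i => ‖v i - z'‖)
    rw [hr', ← hi]
    exact (norm_sub_lt_of_forall_norm_sub_le (convex_convexHull ℝ _) hz hz' hproj
      (hv_mem i)).trans_le (hfeas i).2

theorem sib_projection_improves {d n : ℕ} (hn : 0 < n)
    (Ω : Fin n → Set (EuclideanSpace ℝ (Fin d)))
    (hne : ∀ i, (Ω i).Nonempty) (hcpt : ∀ i, IsCompact (Ω i))
    (hcvx : ∀ i, Convex ℝ (Ω i))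
    (z : EuclideanSpace ℝ (Fin d)) (v : Fin n → EuclideanSpace ℝ (Fin d)) (r : ℝ)
    (hfeas : ∀ i, v i ∈ Ω i ∧ ‖z - v i‖ ≤ r)
    (hz : z ∉ convexHull ℝ (⋃ i, Ω i))
    (z' : EuclideanSpace ℝ (Fin d))
    (hz' : z' ∈ convexHull ℝ (⋃ i, Ω i))
    (hproj : ∀ x ∈ convexHull ℝ (⋃ i, Ω i), ‖z - z'‖ ≤ ‖z - x‖)
    (r' : ℝ) (hr' : r' = ⨆ i, ‖v i - z'‖) :
    (∀ i, v i ∈ Ω i ∧ ‖z' - v i‖ ≤ r') ∧ r' < r :=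
  sib_projection_improves_general hn Ω z v r hfeas hz z' hz' hproj r' hr'
end
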